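/- Let φ be a restricted 3-SAT formula (every clause has 2 or 3 literals, every variable occurs at most twice unnegated and at most twice negated) with ℓ ≥ 1 variables and k ≥ 1 clauses, and let p ∈ (0,1]. Then the malicious Bayesian congestion game Γ_b(φ,p), in which only the single player u_1 is malicious with positive probability, possesses a pure Bayesian Nash equilibrium if and only if φ is satisfiable. -/
import Mathlib


open Finset

/-- The data of a malicious Bayesian congestion game: strategy sets (sets of
nonempty subsets of resources), type probabilities, latency functions. -/
structure Game (N E : Type) where
  S : N → Finset (Finset E)
  p : N → ℝ
  f : E → ℝ → ℝ

namespace Game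

variable {N E : Type} [Fintype N] [DecidableEq N] [Fintype E] [DecidableEq E]

/-- A pure strategy profile: each player chooses a pair (selfish strategy, malicious strategy). -/
abbrev Profile (N E : Type) := N → Finset E × Finset E

/-- Validity: both type-agents of each player choose strategies from the player's strategy set. -/
def Valid (G : Game N E) (σ : Profile N E) : Prop :=
  ∀ u, (σ u).1 ∈ G.S u ∧ (σ u).2 ∈ G.S u

/-- Expected selfish load on resource `e`, with player `u` omitted. -/
noncomputable def selfLoadEx (G : Game N E) (σ : Profile N E) (u : N) (e : E) : ℝ :=
  ∑ v ∈ Finset.univ.erase u, if e ∈ (σ v).1 then 1 - G.p v else 0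

/-- Expected malicious load on resource `e`, with player `u` omitted. -/
noncomputable def malLoadEx (G : Game N E) (σ : Profile N E) (u : N) (e : E) : ℝ :=
  ∑ v ∈ Finset.univ.erase u, if e ∈ (σ v).2 then G.p v else 0

/-- Private (expected) cost of player `u` in the pure profile `σ`. -/
noncomputable def PC (G : Game N E) (σ : Profile N E) (u : N) : ℝ :=
  ∑ e ∈ (σ u).1, G.f e (G.selfLoadEx σ u e + G.malLoadEx σ u e + 1)

/-- Social cost of a pure profile: weighted average latency of the selfish type-agents. -/
noncomputable def SC (G : Game N E) (σ : Profile N E) : ℝ :=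
  (∑ u, (1 - G.p u) * G.PC σ u) / ((Fintype.card N : ℝ) - ∑ u, G.p u)

/-- Replace the selfish strategy of player `u` by `t`. -/
def updS (σ : Profile N E) (u : N) (t : Finset E) : Profile N E :=
  Function.update σ u (t, (σ u).2)

/-- Replace the malicious strategy of player `u` by `t`. -/
def updM (σ : Profile N E) (u : N) (t : Finset E) : Profile N E :=
  Function.update σ u ((σ u).1, t)

/-- Pure Bayesian Nash equilibrium: no selfish type-agent can decrease its private cost and
no malicious type-agent can increase the social cost by a unilateral deviation. -/
def IsPureBNE (G : Game N E) (σ : Profile N E) : Prop :=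
  G.Valid σ ∧ ∀ u : N, ∀ t ∈ G.S u,
    G.PC σ u ≤ G.PC (updS σ u t) u ∧ G.SC (updM σ u t) ≤ G.SC σ

end Game
/-- A CNF formula with `l` variables and `k` clauses. A literal is a pair `(x, b)`
where `b = true` means the variable `x` occurs unnegated and `b = false` negated. -/
structure Formula (l k : ℕ) where
  C : Fin k → Finset (Fin l × Bool)

/-- Restricted 3-SAT: every clause has 2 or 3 literals and every variable occurs
at most twice unnegated and at most twice negated. -/
def Formula.Restricted {l k : ℕ} (φ : Formula l k) : Prop :=
  (∀ j, (φ.C j).card = 2 ∨ (φ.C j).card = 3) ∧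
  ∀ (x : Fin l) (b : Bool), (Finset.univ.filter fun j => (x, b) ∈ φ.C j).card ≤ 2

/-- Satisfiability of the formula. -/
def Formula.Satisfiable {l k : ℕ} (φ : Formula l k) : Prop :=
  ∃ v : Fin l → Bool, ∀ j, ∃ lit ∈ φ.C j, v lit.1 = lit.2
/-- Resources of the game `Γ_b(φ,p)`: `e1,…,e4` together with `e_x^0` (`ev x false`)
and `e_x^1` (`ev x true`) for each variable `x`. -/
inductive ResB (l : ℕ) where
  | e1 | e2 | e3 | e4
  | ev (x : Fin l) (b : Bool)
deriving DecidableEq, Fintype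

/-- Players of the game `Γ_b(φ,p)`. -/
inductive PlB (l k : ℕ) where
  | u1 | u2
  | uvar (x : Fin l)
  | ucl (j : Fin k)
deriving DecidableEq, Fintype

/-- The malicious Bayesian congestion game `Γ_b(φ,p)` from part (b) of the reduction:
only player `u1` is malicious with probability `p`; all other players have type
probability `0`. -/
noncomputable def GammaB {l k : ℕ} (φ : Formula l k) (p : ℝ) : Game (PlB l k) (ResB l) where
  S := fun u => match u with
    | .u1 => {{ResB.e1}, {ResB.e2}, {ResB.e3}}
    | .u2 => {{ResB.e1}, {ResB.e2}, {ResB.e3}, {ResB.e4}}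
    | .uvar x => {{ResB.e4}, {ResB.ev x false}, {ResB.ev x true}}
    | .ucl j => (φ.C j).image fun lit => {ResB.ev lit.1 lit.2}
  p := fun u => if u = .u1 then p else 0
  f := fun e x => match e with
    | .ev _ _ => (3 / 2 : ℝ) * x
    | _ => x

set_option linter.unusedSectionVars false
section Infra

variable {l k : ℕ}

def plbEquiv (l k : ℕ) : PlB l k ≃ (Unit ⊕ Unit) ⊕ (Fin l ⊕ Fin k) where
  toFun u := match u with
    | .u1 => .inl (.inl ())
    | .u2 => .inl (.inr ())
    | .uvar x => .inr (.inl x)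
    | .ucl j => .inr (.inr j)
  invFun s := match s with
    | .inl (.inl _) => .u1
    | .inl (.inr _) => .u2
    | .inr (.inl x) => .uvar x
    | .inr (.inr j) => .ucl j
  left_inv u := by cases u <;> rfl
  right_inv s := by rcases s with (⟨⟩|⟨⟩)|(x|j) <;> rfl

lemma sum_plb (g : PlB l k → ℝ) :
    ∑ v, g v = g .u1 + g .u2 + (∑ x, g (.uvar x)) + (∑ j, g (.ucl j)) := by
  rw [← Equiv.sum_comp (plbEquiv l k).symm g]
  simp [Fintype.sum_sum_type, plbEquiv]
  ring

lemma card_plb : Fintype.card (PlB l k) = 2 + l + k := by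
  rw [Fintype.card_congr (plbEquiv l k)]
  simp; ring

namespace Game

variable {N E : Type} [Fintype N] [DecidableEq N] [Fintype E] [DecidableEq E]
variable (G : Game N E) (σ : Profile N E)

lemma updS_fst (u : N) (t : Finset E) (v : N) :
    (updS σ u t v).1 = if v = u then t else (σ v).1 := by
  by_cases h : v = u <;> simp [updS, Function.update_apply, h]

lemma updS_snd (u : N) (t : Finset E) (v : N) :
    (updS σ u t v).2 = (σ v).2 := by
  by_cases h : v = u <;> simp [updS, Function.update_apply, h]

lemma updM_fst (u : N) (t : Finset E) (v : N) :
    (updM σ u t v).1 = (σ v).1 := by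
  by_cases h : v = u <;> simp [updM, Function.update_apply, h]

lemma updM_snd (u : N) (t : Finset E) (v : N) :
    (updM σ u t v).2 = if v = u then t else (σ v).2 := by
  by_cases h : v = u <;> simp [updM, Function.update_apply, h]

lemma selfLoadEx_updM (u : N) (t : Finset E) (w : N) (e : E) :
    G.selfLoadEx (updM σ u t) w e = G.selfLoadEx σ w e := by
  unfold selfLoadEx; exact Finset.sum_congr rfl fun v _ => by rw [updM_fst]

lemma selfLoadEx_eq_sub (u : N) (e : E) :
    G.selfLoadEx σ u e =
      (∑ v, if e ∈ (σ v).1 then 1 - G.p v else 0) -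
        (if e ∈ (σ u).1 then 1 - G.p u else 0) := by
  unfold selfLoadEx
  rw [Finset.sum_erase_eq_sub (Finset.mem_univ u)]

lemma selfLoadEx_updS (u : N) (t : Finset E) (e : E) :
    G.selfLoadEx (updS σ u t) u e = G.selfLoadEx σ u e := by
  unfold selfLoadEx
  refine Finset.sum_congr rfl fun v hv => ?_
  rw [updS_fst, if_neg (Finset.ne_of_mem_erase hv)]

lemma malLoadEx_updS (u : N) (t : Finset E) (w : N) (e : E) :
    G.malLoadEx (updS σ u t) w e = G.malLoadEx σ w e := by
  unfold malLoadEx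
  exact Finset.sum_congr rfl fun v hv => by rw [updS_snd]

lemma PC_updS (u : N) (t : Finset E) :
    G.PC (updS σ u t) u = ∑ e ∈ t, G.f e (G.selfLoadEx σ u e + G.malLoadEx σ u e + 1) := by
  unfold PC
  rw [updS_fst]
  simp only [if_pos rfl]
  exact Finset.sum_congr rfl fun e _ => by rw [selfLoadEx_updS, malLoadEx_updS]

end Game

end Infra
section GB

open Game PlB ResB

variable {l k : ℕ} {φ : Formula l k} {p : ℝ}

lemma singleton_mem_iff {α : Type*} [DecidableEq α] (a e : α) :
    (e ∈ ({a} : Finset α) ↔ ({a} : Finset α) = {e}) := by simp [eq_comm]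

lemma GB_p_u1 : (GammaB φ p).p .u1 = p := by simp [GammaB]

lemma GB_sum_p : ∑ v, (GammaB φ p).p v = p := by
  rw [sum_plb]
  simp [GammaB]

lemma GB_mal (σ : Profile (PlB l k) (ResB l)) (w : PlB l k) (e : ResB l) :
    (GammaB φ p).malLoadEx σ w e =
      if w = .u1 then 0 else if e ∈ (σ .u1).2 then p else 0 := by
  unfold Game.malLoadEx
  by_cases hw : w = PlB.u1
  · subst hw; rw [if_pos rfl]
    refine Finset.sum_eq_zero fun v hv => ?_
    have hv1 : v ≠ PlB.u1 := Finset.ne_of_mem_erase hv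
    simp [GammaB, hv1]
  · rw [if_neg hw, Finset.sum_eq_single PlB.u1]
    · simp [GammaB]
    · intro v _ hvne; simp [GammaB, hvne]
    · intro h
      exact absurd (Finset.mem_erase.2 ⟨Ne.symm hw, Finset.mem_univ _⟩) h

section valid
variable {σ : Profile (PlB l k) (ResB l)} (hσ : (GammaB φ p).Valid σ)
include hσ

lemma valid_u1_fst :
    (σ .u1).1 = {e1} ∨ (σ .u1).1 = {e2} ∨ (σ .u1).1 = {e3} := by
  have := (hσ .u1).1; simpa [GammaB] using this

lemma valid_u1_snd :
    (σ .u1).2 = {e1} ∨ (σ .u1).2 = {e2} ∨ (σ .u1).2 = {e3} := by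
  have := (hσ .u1).2; simpa [GammaB] using this

lemma valid_u2_fst :
    (σ .u2).1 = {e1} ∨ (σ .u2).1 = {e2} ∨ (σ .u2).1 = {e3} ∨ (σ .u2).1 = {e4} := by
  have := (hσ .u2).1; simpa [GammaB] using this

lemma valid_uvar_fst (x : Fin l) :
    (σ (.uvar x)).1 = {e4} ∨ (σ (.uvar x)).1 = {ev x false} ∨ (σ (.uvar x)).1 = {ev x true} := by
  have := (hσ (.uvar x)).1; simpa [GammaB] using this

lemma valid_ucl_fst (j : Fin k) :
    ∃ q ∈ φ.C j, (σ (.ucl j)).1 = {ev q.1 q.2} := by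
  have := (hσ (.ucl j)).1
  simp only [GammaB, Finset.mem_image] at this
  obtain ⟨q, hq, hq2⟩ := this
  exact ⟨q, hq, hq2.symm⟩

lemma notMem_ucl (j : Fin k) (e : ResB l) (he : ∀ x b, e ≠ ev x b) :
    e ∉ (σ (.ucl j)).1 := by
  obtain ⟨q, _, hq⟩ := valid_ucl_fst hσ j
  rw [hq]
  simp [he q.1 q.2]

lemma notMem_uvar (x : Fin l) (e : ResB l) (he4 : e ≠ e4) (he : ∀ y b, e ≠ ev y b) :
    e ∉ (σ (.uvar x)).1 := by
  rcases valid_uvar_fst hσ x with h | h | h <;> rw [h] <;> simp [he4, he x false, he x true]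

lemma notMem_u1_fst (e : ResB l) (h1 : e ≠ e1) (h2 : e ≠ e2) (h3 : e ≠ e3) :
    e ∉ (σ .u1).1 := by
  rcases valid_u1_fst hσ with h | h | h <;> rw [h] <;> simp [h1, h2, h3]

lemma notMem_u1_snd (e : ResB l) (h1 : e ≠ e1) (h2 : e ≠ e2) (h3 : e ≠ e3) :
    e ∉ (σ .u1).2 := by
  rcases valid_u1_snd hσ with h | h | h <;> rw [h] <;> simp [h1, h2, h3]

lemma notMem_u2_fst (e : ResB l) (h1 : e ≠ e1) (h2 : e ≠ e2) (h3 : e ≠ e3) (h4 : e ≠ e4) :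
    e ∉ (σ .u2).1 := by
  rcases valid_u2_fst hσ with h | h | h | h <;> rw [h] <;> simp [h1, h2, h3, h4]

lemma mem_u1_fst_iff (e : ResB l) : e ∈ (σ .u1).1 ↔ (σ .u1).1 = {e} := by
  rcases valid_u1_fst hσ with h | h | h <;> rw [h] <;> exact singleton_mem_iff _ _

lemma mem_u1_snd_iff (e : ResB l) : e ∈ (σ .u1).2 ↔ (σ .u1).2 = {e} := by
  rcases valid_u1_snd hσ with h | h | h <;> rw [h] <;> exact singleton_mem_iff _ _

lemma mem_u2_fst_iff (e : ResB l) : e ∈ (σ .u2).1 ↔ (σ .u2).1 = {e} := by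
  rcases valid_u2_fst hσ with h | h | h | h <;> rw [h] <;> exact singleton_mem_iff _ _

lemma mem_uvar_fst_iff (x : Fin l) (e : ResB l) :
    e ∈ (σ (.uvar x)).1 ↔ (σ (.uvar x)).1 = {e} := by
  rcases valid_uvar_fst hσ x with h | h | h <;> rw [h] <;> exact singleton_mem_iff _ _

lemma mem_ucl_fst_iff (j : Fin k) (e : ResB l) :
    e ∈ (σ (.ucl j)).1 ↔ (σ (.ucl j)).1 = {e} := by
  obtain ⟨q, _, hq⟩ := valid_ucl_fst hσ j
  rw [hq]; exact singleton_mem_iff _ _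

end valid

lemma GB_full_sum (σ : Profile (PlB l k) (ResB l)) (e : ResB l) :
    ∑ v, (if e ∈ (σ v).1 then 1 - (GammaB φ p).p v else 0)
      = (if e ∈ (σ .u1).1 then 1 - p else 0) + (if e ∈ (σ .u2).1 then (1:ℝ) else 0)
        + (∑ x, if e ∈ (σ (.uvar x)).1 then (1:ℝ) else 0)
        + (∑ j, if e ∈ (σ (.ucl j)).1 then (1:ℝ) else 0) := by
  rw [sum_plb]
  simp [GammaB]

end GB
section Loads

open Game PlB ResB

variable {l k : ℕ} {φ : Formula l k} {p : ℝ}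

/-- Number of clause players on resource `ev x b`. -/
def cntC (σ : Profile (PlB l k) (ResB l)) (x : Fin l) (b : Bool) : ℕ :=
  (Finset.univ.filter fun j : Fin k => (σ (PlB.ucl j)).1 = {ResB.ev x b}).card

/-- Number of variable players on resource `e4`. -/
def cntV (σ : Profile (PlB l k) (ResB l)) : ℕ :=
  (Finset.univ.filter fun x : Fin l => (σ (PlB.uvar x)).1 = {ResB.e4}).card

variable {σ : Profile (PlB l k) (ResB l)} (hσ : (GammaB φ p).Valid σ)
include hσ

lemma sum_uvar_zero (e : ResB l) (he4 : e ≠ e4) (he : ∀ y b, e ≠ ev y b) :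
    (∑ x, if e ∈ (σ (.uvar x)).1 then (1:ℝ) else 0) = 0 :=
  Finset.sum_eq_zero fun x _ => if_neg (notMem_uvar hσ x e he4 he)

lemma sum_ucl_zero (e : ResB l) (he : ∀ y b, e ≠ ev y b) :
    (∑ j, if e ∈ (σ (.ucl j)).1 then (1:ℝ) else 0) = 0 :=
  Finset.sum_eq_zero fun j _ => if_neg (notMem_ucl hσ j e he)

lemma sum_ucl_cnt (x : Fin l) (b : Bool) :
    (∑ j, if ev x b ∈ (σ (.ucl j)).1 then (1:ℝ) else 0) = (cntC σ x b : ℝ) := by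
  rw [Finset.sum_congr rfl fun j _ => if_congr (mem_ucl_fst_iff hσ j _) rfl rfl]
  simp only [Finset.sum_boole]
  rfl

lemma sum_uvar_e4 :
    (∑ x, if e4 ∈ (σ (.uvar x)).1 then (1:ℝ) else 0) = (cntV σ : ℝ) := by
  rw [Finset.sum_congr rfl fun x _ => if_congr (mem_uvar_fst_iff hσ x _) rfl rfl]
  simp only [Finset.sum_boole]
  rfl

lemma sum_uvar_ev (x : Fin l) (b : Bool) :
    (∑ y, if ev x b ∈ (σ (.uvar y)).1 then (1:ℝ) else 0)
      = (if (σ (.uvar x)).1 = {ev x b} then (1:ℝ) else 0) := by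
  rw [Finset.sum_eq_single x]
  · rw [if_congr (mem_uvar_fst_iff hσ x _) rfl rfl]
  · intro y _ hyx
    refine if_neg fun hmem => ?_
    rcases valid_uvar_fst hσ y with h | h | h <;> rw [h] at hmem <;>
        simp only [Finset.mem_singleton, ResB.ev.injEq] at hmem
    · exact absurd hmem (by simp)
    · exact absurd hmem.1 (Ne.symm hyx)
    · exact absurd hmem.1 (Ne.symm hyx)
  · exact fun h => absurd (Finset.mem_univ x) h

lemma selfLoadEx_u1 (e : ResB l) (h1 : e = e1 ∨ e = e2 ∨ e = e3) :
    (GammaB φ p).selfLoadEx σ .u1 e = if (σ .u2).1 = {e} then 1 else 0 := by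
  have hne4 : e ≠ e4 := by rcases h1 with h|h|h <;> subst h <;> simp
  have hnev : ∀ y b, e ≠ ev y b := by rcases h1 with h|h|h <;> subst h <;> simp
  rw [Game.selfLoadEx_eq_sub, GB_full_sum, sum_uvar_zero hσ e hne4 hnev,
    sum_ucl_zero hσ e hnev, GB_p_u1]
  simp only [mem_u1_fst_iff hσ, mem_u2_fst_iff hσ]
  ring

lemma selfLoadEx_u2_123 (e : ResB l) (h1 : e = e1 ∨ e = e2 ∨ e = e3) :
    (GammaB φ p).selfLoadEx σ .u2 e = if (σ .u1).1 = {e} then 1 - p else 0 := by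
  have hne4 : e ≠ e4 := by rcases h1 with h|h|h <;> subst h <;> simp
  have hnev : ∀ y b, e ≠ ev y b := by rcases h1 with h|h|h <;> subst h <;> simp
  rw [Game.selfLoadEx_eq_sub, GB_full_sum, sum_uvar_zero hσ e hne4 hnev,
    sum_ucl_zero hσ e hnev]
  have hp2 : (GammaB φ p).p .u2 = 0 := by simp [GammaB]
  rw [hp2]
  simp only [mem_u1_fst_iff hσ, mem_u2_fst_iff hσ]
  ring

lemma selfLoadEx_u2_e4 :
    (GammaB φ p).selfLoadEx σ .u2 e4 = (cntV σ : ℝ) := by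
  have hnev : ∀ y b, (e4 : ResB l) ≠ ev y b := by simp
  have h1 : (e4 : ResB l) ∉ (σ .u1).1 := notMem_u1_fst hσ _ (by simp) (by simp) (by simp)
  rw [Game.selfLoadEx_eq_sub, GB_full_sum, sum_ucl_zero hσ _ hnev, sum_uvar_e4 hσ]
  have hp2 : (GammaB φ p).p .u2 = 0 := by simp [GammaB]
  rw [hp2, if_neg h1]
  ring

lemma selfLoadEx_uvar_e4 (x : Fin l) :
    (GammaB φ p).selfLoadEx σ (.uvar x) e4
      = (if (σ .u2).1 = {e4} then (1:ℝ) else 0) + (cntV σ : ℝ)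
        - (if (σ (.uvar x)).1 = {e4} then (1:ℝ) else 0) := by
  have hnev : ∀ y b, (e4 : ResB l) ≠ ev y b := by simp
  have h1 : (e4 : ResB l) ∉ (σ .u1).1 := notMem_u1_fst hσ _ (by simp) (by simp) (by simp)
  rw [Game.selfLoadEx_eq_sub, GB_full_sum, sum_ucl_zero hσ _ hnev, sum_uvar_e4 hσ]
  have hp : (GammaB φ p).p (.uvar x) = 0 := by simp [GammaB]
  rw [hp, if_neg h1]
  simp only [mem_u2_fst_iff hσ, mem_uvar_fst_iff hσ]
  ring

lemma selfLoadEx_uvar_ev (x : Fin l) (b : Bool) :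
    (GammaB φ p).selfLoadEx σ (.uvar x) (ev x b) = (cntC σ x b : ℝ) := by
  have h1 : (ev x b) ∉ (σ .u1).1 := notMem_u1_fst hσ _ (by simp) (by simp) (by simp)
  have h2 : (ev x b) ∉ (σ .u2).1 := notMem_u2_fst hσ _ (by simp) (by simp) (by simp) (by simp)
  rw [Game.selfLoadEx_eq_sub, GB_full_sum, sum_ucl_cnt hσ, sum_uvar_ev hσ]
  have hp : (GammaB φ p).p (.uvar x) = 0 := by simp [GammaB]
  rw [hp, if_neg h1, if_neg h2]
  simp only [mem_uvar_fst_iff hσ]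
  ring

lemma selfLoadEx_ucl (j : Fin k) (x : Fin l) (b : Bool) :
    (GammaB φ p).selfLoadEx σ (.ucl j) (ev x b)
      = (if (σ (.uvar x)).1 = {ev x b} then (1:ℝ) else 0) + (cntC σ x b : ℝ)
        - (if (σ (.ucl j)).1 = {ev x b} then (1:ℝ) else 0) := by
  have h1 : (ev x b) ∉ (σ .u1).1 := notMem_u1_fst hσ _ (by simp) (by simp) (by simp)
  have h2 : (ev x b) ∉ (σ .u2).1 := notMem_u2_fst hσ _ (by simp) (by simp) (by simp) (by simp)
  rw [Game.selfLoadEx_eq_sub, GB_full_sum, sum_ucl_cnt hσ, sum_uvar_ev hσ]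
  have hp : (GammaB φ p).p (.ucl j) = 0 := by simp [GammaB]
  rw [hp, if_neg h1, if_neg h2]
  simp only [mem_ucl_fst_iff hσ]
  ring

end Loads
section PCSC

open Game PlB ResB

variable {l k : ℕ} {φ : Formula l k} {p : ℝ}

lemma GB_f_e1 (t : ℝ) : (GammaB φ p).f e1 t = t := rfl
lemma GB_f_e2 (t : ℝ) : (GammaB φ p).f e2 t = t := rfl
lemma GB_f_e3 (t : ℝ) : (GammaB φ p).f e3 t = t := rfl
lemma GB_f_e4 (t : ℝ) : (GammaB φ p).f e4 t = t := rfl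
lemma GB_f_ev (x : Fin l) (b : Bool) (t : ℝ) :
    (GammaB φ p).f (ev x b) t = 3 / 2 * t := rfl

lemma PC_singleton {N E : Type} [Fintype N] [DecidableEq N] [Fintype E] [DecidableEq E]
    (G : Game N E) (σ : Profile N E) (w : N) (e : E) (h : (σ w).1 = {e}) :
    G.PC σ w = G.f e (G.selfLoadEx σ w e + G.malLoadEx σ w e + 1) := by
  unfold PC
  rw [h, Finset.sum_singleton]

lemma SC_congr {N E : Type} [Fintype N] [DecidableEq N] [Fintype E] [DecidableEq E]
    (G : Game N E) (σ' σ : Profile N E) (h : ∀ w, G.PC σ' w = G.PC σ w) :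
    G.SC σ' = G.SC σ := by
  unfold SC
  rw [Finset.sum_congr rfl fun w _ => by rw [h w]]

lemma PC_updM_ne_u1 (σ : Profile (PlB l k) (ResB l)) (u : PlB l k) (hu : u ≠ .u1)
    (t : Finset (ResB l)) (w : PlB l k) :
    (GammaB φ p).PC (Game.updM σ u t) w = (GammaB φ p).PC σ w := by
  unfold Game.PC
  rw [Game.updM_fst]
  refine Finset.sum_congr rfl fun e _ => ?_
  rw [Game.selfLoadEx_updM, GB_mal, GB_mal, Game.updM_snd, if_neg (Ne.symm hu)]

lemma PC_updM_u1 (σ : Profile (PlB l k) (ResB l)) (t : Finset (ResB l)) (w : PlB l k) :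
    (GammaB φ p).PC (Game.updM σ .u1 t) w
      = ∑ e ∈ (σ w).1, (GammaB φ p).f e
          ((GammaB φ p).selfLoadEx σ w e
            + (if w = .u1 then 0 else if e ∈ t then p else 0) + 1) := by
  unfold Game.PC
  rw [Game.updM_fst]
  refine Finset.sum_congr rfl fun e _ => ?_
  rw [Game.selfLoadEx_updM, GB_mal, Game.updM_snd, if_pos rfl]

lemma SC_sub (σ' σ : Profile (PlB l k) (ResB l))
    (h : ∀ w, w ≠ .u2 → (GammaB φ p).PC σ' w = (GammaB φ p).PC σ w) :
    (GammaB φ p).SC σ' - (GammaB φ p).SC σ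
      = ((GammaB φ p).PC σ' .u2 - (GammaB φ p).PC σ .u2) / ((2 + l + k : ℝ) - p) := by
  unfold Game.SC
  rw [GB_sum_p, card_plb, div_sub_div_same]
  have hc : ((2 + l + k : ℕ) : ℝ) = (2 + l + k : ℝ) := by push_cast; ring
  rw [hc]
  congr 1
  rw [sum_plb (fun w => (1 - (GammaB φ p).p w) * (GammaB φ p).PC σ' w),
    sum_plb (fun w => (1 - (GammaB φ p).p w) * (GammaB φ p).PC σ w)]
  have hv : (∑ x : Fin l, (1 - (GammaB φ p).p (.uvar x)) * (GammaB φ p).PC σ' (.uvar x))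
      = ∑ x : Fin l, (1 - (GammaB φ p).p (.uvar x)) * (GammaB φ p).PC σ (.uvar x) :=
    Finset.sum_congr rfl fun x _ => by rw [h (.uvar x) (by simp)]
  have hcl : (∑ j : Fin k, (1 - (GammaB φ p).p (.ucl j)) * (GammaB φ p).PC σ' (.ucl j))
      = ∑ j : Fin k, (1 - (GammaB φ p).p (.ucl j)) * (GammaB φ p).PC σ (.ucl j) :=
    Finset.sum_congr rfl fun j _ => by rw [h (.ucl j) (by simp)]
  have hp2 : (GammaB φ p).p .u2 = 0 := by simp [GammaB]
  rw [hv, hcl, h .u1 (by simp), hp2]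
  ring

lemma GB_den_pos (hp1 : p ≤ 1) : (0:ℝ) < (2 + l + k : ℝ) - p := by
  have : (0:ℝ) ≤ l := Nat.cast_nonneg l
  have : (0:ℝ) ≤ k := Nat.cast_nonneg k
  linarith

end PCSC
section Forward

open Game PlB ResB

variable {l k : ℕ} {φ : Formula l k} {p : ℝ}

lemma PC_updM_u1_eq {σ : Profile (PlB l k) (ResB l)} (hσ : (GammaB φ p).Valid σ)
    (t : Finset (ResB l)) (ht : t = {e1} ∨ t = {e2} ∨ t = {e3})
    (w : PlB l k) (hw2 : w ≠ .u2) :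
    (GammaB φ p).PC (Game.updM σ .u1 t) w = (GammaB φ p).PC σ w := by
  have htno : ∀ e : ResB l, (e = e4 ∨ ∃ y b, e = ev y b) → e ∉ t := by
    rintro e (rfl | ⟨y, b, rfl⟩) <;> rcases ht with rfl | rfl | rfl <;> simp
  have hsno : ∀ e : ResB l, (e = e4 ∨ ∃ y b, e = ev y b) → e ∉ (σ .u1).2 := by
    rintro e (rfl | ⟨y, b, rfl⟩) <;>
      exact notMem_u1_snd hσ _ (by simp) (by simp) (by simp)
  rw [PC_updM_u1]
  unfold Game.PC
  refine Finset.sum_congr rfl fun e he => ?_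
  rw [GB_mal]
  by_cases hw1 : w = .u1
  · simp [hw1]
  · have hshape : e = e4 ∨ ∃ y b, e = ev y b := by
      cases w with
      | u1 => exact absurd rfl hw1
      | u2 => exact absurd rfl hw2
      | uvar x =>
        rcases valid_uvar_fst hσ x with h | h | h <;> rw [h] at he <;>
          simp only [Finset.mem_singleton] at he <;> subst he
        · exact Or.inl rfl
        · exact Or.inr ⟨x, false, rfl⟩
        · exact Or.inr ⟨x, true, rfl⟩
      | ucl j =>
        obtain ⟨q, _, hq⟩ := valid_ucl_fst hσ j
        rw [hq] at he
        simp only [Finset.mem_singleton] at he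
        exact Or.inr ⟨q.1, q.2, he⟩
    rw [if_neg hw1, if_neg hw1, if_neg (htno e hshape), if_neg (hsno e hshape)]

lemma pick3 (s t : Finset (ResB l)) (hs : s = {e1} ∨ s = {e2} ∨ s = {e3})
    (ht : t = {e1} ∨ t = {e2} ∨ t = {e3}) :
    ∃ e' : ResB l, (e' = e1 ∨ e' = e2 ∨ e' = e3) ∧ s ≠ {e'} ∧ t ≠ {e'} := by
  rcases hs with rfl | rfl | rfl <;> rcases ht with rfl | rfl | rfl
  · exact ⟨e2, by simp, by simp, by simp⟩
  · exact ⟨e3, by simp, by simp, by simp⟩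
  · exact ⟨e2, by simp, by simp, by simp⟩
  · exact ⟨e3, by simp, by simp, by simp⟩
  · exact ⟨e1, by simp, by simp, by simp⟩
  · exact ⟨e1, by simp, by simp, by simp⟩
  · exact ⟨e2, by simp, by simp, by simp⟩
  · exact ⟨e1, by simp, by simp, by simp⟩
  · exact ⟨e1, by simp, by simp, by simp⟩

lemma GB_forward (hp0 : 0 < p) (hp1 : p ≤ 1)
    (σ : Game.Profile (PlB l k) (ResB l)) (hBNE : (GammaB φ p).IsPureBNE σ) :
    φ.Satisfiable := by
  obtain ⟨hσ, hbr⟩ := hBNE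
  have hD : (0:ℝ) < (2 + l + k : ℝ) - p := GB_den_pos hp1
  -- Step 1: u2 plays e4
  have step1 : (σ .u2).1 = {e4} := by
    have key : ∀ e : ResB l, (e = e1 ∨ e = e2 ∨ e = e3) → (σ .u2).1 = {e} → False := by
      intro e he hu2
      have hf : ∀ z : ℝ, (GammaB φ p).f e z = z := by
        rcases he with rfl | rfl | rfl <;> intro z <;> rfl
      have htS : ({e} : Finset (ResB l)) ∈ (GammaB φ p).S .u1 := by
        rcases he with rfl | rfl | rfl <;> simp [GammaB]
      -- the malicious agent must sit on u2's resource
      have hSC := (hbr .u1 {e} htS).2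
      have hsub := SC_sub (Game.updM σ .u1 {e}) σ
        (fun w hw => PC_updM_u1_eq hσ {e} (by rcases he with rfl|rfl|rfl <;> simp) w hw)
      rw [eq_div_iff hD.ne'] at hsub
      have hPCle : (GammaB φ p).PC (Game.updM σ .u1 {e}) .u2 ≤ (GammaB φ p).PC σ .u2 := by
        nlinarith
      have hPCold : (GammaB φ p).PC σ .u2
          = (if (σ .u1).1 = {e} then 1 - p else 0)
            + (if e ∈ (σ .u1).2 then p else 0) + 1 := by
        rw [PC_singleton _ σ .u2 e hu2, hf, selfLoadEx_u2_123 hσ e he, GB_mal]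
        simp
      have hPCnew : (GammaB φ p).PC (Game.updM σ .u1 {e}) .u2
          = (if (σ .u1).1 = {e} then 1 - p else 0) + p + 1 := by
        rw [PC_updM_u1, hu2, Finset.sum_singleton, hf, selfLoadEx_u2_123 hσ e he]
        simp
      rw [hPCold, hPCnew] at hPCle
      have hmem : e ∈ (σ .u1).2 := by
        by_contra hnm
        rw [if_neg hnm] at hPCle
        linarith
      have hm2 : (σ .u1).2 = {e} := (mem_u1_snd_iff hσ e).mp hmem
      -- u2 deviates to a free resource
      obtain ⟨e', he', hne1, hnee⟩ :=
        pick3 (σ .u1).1 {e} (valid_u1_fst hσ) (by rcases he with rfl|rfl|rfl <;> simp)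
      have hne : e' ≠ e := fun h => hnee (by rw [h])
      have hf' : ∀ z : ℝ, (GammaB φ p).f e' z = z := by
        rcases he' with rfl | rfl | rfl <;> intro z <;> rfl
      have htS' : ({e'} : Finset (ResB l)) ∈ (GammaB φ p).S .u2 := by
        rcases he' with rfl | rfl | rfl <;> simp [GammaB]
      have hdev := (hbr .u2 {e'} htS').1
      rw [Game.PC_updS, Finset.sum_singleton, hf', selfLoadEx_u2_123 hσ e' he',
        GB_mal, if_neg hne1, hm2] at hdev
      simp only [Finset.mem_singleton, if_neg hne, reduceCtorEq, if_false] at hdev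
      rw [hPCold, hm2] at hdev
      simp only [Finset.mem_singleton, if_pos rfl] at hdev
      split_ifs at hdev <;> linarith
    rcases valid_u2_fst hσ with h | h | h | h
    · exact absurd h (fun h => key e1 (by simp) h)
    · exact absurd h (fun h => key e2 (by simp) h)
    · exact absurd h (fun h => key e3 (by simp) h)
    · exact h
  -- Step 2: no variable player on e4
  have step2 : ∀ x, (σ (.uvar x)).1 ≠ {e4} := by
    obtain ⟨e', he', hne1, hne2⟩ :=
      pick3 (σ .u1).1 (σ .u1).2 (valid_u1_fst hσ) (valid_u1_snd hσ)
    have hf' : ∀ z : ℝ, (GammaB φ p).f e' z = z := by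
      rcases he' with rfl | rfl | rfl <;> intro z <;> rfl
    have htS' : ({e'} : Finset (ResB l)) ∈ (GammaB φ p).S .u2 := by
      rcases he' with rfl | rfl | rfl <;> simp [GammaB]
    have hdev := (hbr .u2 {e'} htS').1
    rw [Game.PC_updS, Finset.sum_singleton, hf', selfLoadEx_u2_123 hσ e' he',
      GB_mal, if_neg hne1] at hdev
    have hnm2 : e' ∉ (σ .u1).2 := fun hm => hne2 ((mem_u1_snd_iff hσ e').mp hm)
    rw [if_neg hnm2] at hdev
    have hnm4 : (e4 : ResB l) ∉ (σ .u1).2 :=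
      notMem_u1_snd hσ _ (by simp) (by simp) (by simp)
    rw [PC_singleton _ σ .u2 e4 step1, GB_f_e4, selfLoadEx_u2_e4 hσ, GB_mal,
      if_neg (by simp : (PlB.u2 : PlB l k) ≠ .u1), if_neg hnm4] at hdev
    simp only [if_neg (by simp : (PlB.u2 : PlB l k) ≠ .u1)] at hdev
    have hcv : (cntV σ : ℝ) ≤ 0 := by linarith
    have hcv0 : cntV σ = 0 := by exact_mod_cast le_antisymm hcv (Nat.cast_nonneg _)
    intro x hx
    have : x ∈ Finset.univ.filter fun x : Fin l => (σ (PlB.uvar x)).1 = {ResB.e4} :=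
      Finset.mem_filter.2 ⟨Finset.mem_univ _, hx⟩
    have := Finset.card_ne_zero_of_mem this
    exact this hcv0
  have hcv0 : cntV σ = 0 := by
    rw [cntV, Finset.card_eq_zero, Finset.filter_eq_empty_iff]
    exact fun {x} _ => step2 x
  -- Step 3: no clause player shares with a variable player
  have step3 : ∀ x b, (σ (.uvar x)).1 = {ev x b} → cntC σ x b = 0 := by
    intro x b hx
    have hnm : (ev x b : ResB l) ∉ (σ .u1).2 :=
      notMem_u1_snd hσ _ (by simp) (by simp) (by simp)
    have hnm4 : (e4 : ResB l) ∉ (σ .u1).2 :=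
      notMem_u1_snd hσ _ (by simp) (by simp) (by simp)
    have hown : (GammaB φ p).PC σ (.uvar x)
        = 3 / 2 * ((cntC σ x b : ℝ) + 0 + 1) := by
      rw [PC_singleton _ σ (.uvar x) (ev x b) hx, GB_f_ev, selfLoadEx_uvar_ev hσ, GB_mal,
        if_neg (by simp : (PlB.uvar x : PlB l k) ≠ .u1), if_neg hnm]
    have htS : ({e4} : Finset (ResB l)) ∈ (GammaB φ p).S (.uvar x) := by simp [GammaB]
    have hdev := (hbr (.uvar x) {e4} htS).1
    rw [Game.PC_updS, Finset.sum_singleton, GB_f_e4, selfLoadEx_uvar_e4 hσ, GB_mal,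
      if_neg (by simp : (PlB.uvar x : PlB l k) ≠ .u1), if_neg hnm4, if_pos step1,
      hcv0, if_neg (by rw [hx]; simp), hown] at hdev
    by_contra hne
    have : (1:ℝ) ≤ (cntC σ x b : ℝ) := by
      exact_mod_cast Nat.one_le_iff_ne_zero.mpr hne
    push_cast at hdev
    linarith
  -- Step 4: read off a satisfying assignment
  refine ⟨fun x => if (σ (.uvar x)).1 = {ev x false} then true else false, fun j => ?_⟩
  obtain ⟨q, hqC, hq⟩ := valid_ucl_fst hσ j
  refine ⟨q, hqC, ?_⟩
  have hcnt : cntC σ q.1 q.2 ≠ 0 := by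
    have : j ∈ Finset.univ.filter fun j : Fin k => (σ (PlB.ucl j)).1 = {ResB.ev q.1 q.2} :=
      Finset.mem_filter.2 ⟨Finset.mem_univ _, hq⟩
    exact Finset.card_ne_zero_of_mem this
  show (if (σ (.uvar q.1)).1 = {ev q.1 false} then true else false) = q.2
  rcases valid_uvar_fst hσ q.1 with h | h | h
  · exact absurd h (step2 q.1)
  · have hb : q.2 ≠ false := fun hb => hcnt (by rw [hb]; exact step3 q.1 false h)
    rw [if_pos h]
    cases hq2 : q.2
    · exact absurd hq2 hb
    · rfl
  · have hb : q.2 ≠ true := fun hb => hcnt (by rw [hb]; exact step3 q.1 true h)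
    rw [if_neg (by rw [h]; simp)]
    cases hq2 : q.2
    · rfl
    · exact absurd hq2 hb

end Forward
section Backward

open Game PlB ResB

/-- The equilibrium profile built from an assignment `v` and a selection `a` of one
satisfied literal per clause. -/
def buildProf (l k : ℕ) (v : Fin l → Bool) (a : Fin k → Fin l × Bool) :
    Game.Profile (PlB l k) (ResB l)
  | .u1 => ({ResB.e1}, {ResB.e1})
  | .u2 => ({ResB.e4}, {ResB.e4})
  | .uvar x => ({ResB.ev x (!v x)}, {ResB.e4})
  | .ucl j => ({ResB.ev (a j).1 (a j).2}, {ResB.ev (a j).1 (a j).2})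

variable {l k : ℕ} {φ : Formula l k} {p : ℝ}

lemma GB_backward (hφ : φ.Restricted) (hp0 : 0 < p) (hp1 : p ≤ 1)
    (hsat : φ.Satisfiable) :
    ∃ σ : Game.Profile (PlB l k) (ResB l), (GammaB φ p).IsPureBNE σ := by
  classical
  obtain ⟨v, hv⟩ := hsat
  have hP0 : ∃ a : Fin k → Fin l × Bool, ∀ j, a j ∈ φ.C j ∧ v (a j).1 = (a j).2 := by
    choose f h1 h2 using hv
    exact ⟨f, fun j => ⟨h1 j, h2 j⟩⟩
  set Φ : (Fin k → Fin l × Bool) → ℕ :=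
    fun b => ∑ q : Fin l × Bool, ((Finset.univ.filter fun j => b j = q).card)^2 with hΦ
  obtain ⟨a, haP, hamin⟩ := Finset.exists_min_image
    (Finset.univ.filter fun b : Fin k → Fin l × Bool =>
      ∀ j, b j ∈ φ.C j ∧ v (b j).1 = (b j).2) Φ
    (by obtain ⟨a0, h⟩ := hP0; exact ⟨a0, Finset.mem_filter.2 ⟨Finset.mem_univ _, h⟩⟩)
  rw [Finset.mem_filter] at haP
  have haC : ∀ j, a j ∈ φ.C j := fun j => (haP.2 j).1
  have haV : ∀ j, v (a j).1 = (a j).2 := fun j => (haP.2 j).2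
  set nA : Fin l × Bool → ℕ := fun q => (Finset.univ.filter fun j => a j = q).card with hnA
  -- basic facts about nA
  have hn2 : ∀ q, nA q ≤ 2 := by
    intro q
    have hsub : (Finset.univ.filter fun j => a j = q)
        ⊆ (Finset.univ.filter fun j => (q.1, q.2) ∈ φ.C j) := by
      intro j hj
      have hj' := (Finset.mem_filter.1 hj).2
      refine Finset.mem_filter.2 ⟨Finset.mem_univ _, ?_⟩
      rw [Prod.mk.eta, ← hj']
      exact haC j
    exact le_trans (Finset.card_le_card hsub) (hφ.2 q.1 q.2)
  have hn0 : ∀ x, nA (x, !v x) = 0 := by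
    intro x
    rw [hnA]
    simp only [Finset.card_eq_zero, Finset.filter_eq_empty_iff]
    intro j _
    intro h
    have := haV j
    rw [h] at this
    simp at this
  -- the exchange argument
  have hexch : ∀ (j : Fin k) (q' : Fin l × Bool), q' ∈ φ.C j → v q'.1 = q'.2 →
      nA (a j) ≤ nA q' + 1 := by
    intro j q' hq'C hq'v
    by_cases hqq : q' = a j
    · rw [hqq]; omega
    · set a' := Function.update a j q' with ha'
      have ha'P : ∀ j', a' j' ∈ φ.C j' ∧ v (a' j').1 = (a' j').2 := by
        intro j'
        by_cases hj : j' = j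
        · subst hj; rw [ha', Function.update_self]; exact ⟨hq'C, hq'v⟩
        · rw [ha', Function.update_of_ne hj]; exact ⟨haC j', haV j'⟩
      have hmin := hamin a' (Finset.mem_filter.2 ⟨Finset.mem_univ _, ha'P⟩)
      have hj_mem : j ∈ Finset.univ.filter fun j' => a j' = a j :=
        Finset.mem_filter.2 ⟨Finset.mem_univ _, rfl⟩
      have h1 : (Finset.univ.filter fun j' => a' j' = a j)
          = (Finset.univ.filter fun j' => a j' = a j).erase j := by
        ext j'
        simp only [Finset.mem_filter, Finset.mem_erase, Finset.mem_univ, true_and]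
        by_cases hj : j' = j
        · subst hj
          rw [ha', Function.update_self]
          exact iff_of_false hqq (fun h => h.1 rfl)
        · rw [ha', Function.update_of_ne hj]
          exact (and_iff_right hj).symm
      have h2 : (Finset.univ.filter fun j' => a' j' = q')
          = insert j (Finset.univ.filter fun j' => a j' = q') := by
        ext j'
        simp only [Finset.mem_filter, Finset.mem_insert, Finset.mem_univ, true_and]
        by_cases hj : j' = j
        · subst hj
          rw [ha', Function.update_self]
          simp
        · rw [ha', Function.update_of_ne hj]
          simp [hj]
      have h3 : ∀ q : Fin l × Bool, q ≠ a j → q ≠ q' →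
          (Finset.univ.filter fun j' => a' j' = q)
            = (Finset.univ.filter fun j' => a j' = q) := by
        intro q hq1 hq2
        ext j'
        simp only [Finset.mem_filter, Finset.mem_univ, true_and]
        by_cases hj : j' = j
        · subst hj
          rw [ha', Function.update_self]
          exact iff_of_false (fun h => hq2 h.symm) (fun h => hq1 h.symm)
        · rw [ha', Function.update_of_ne hj]
      have hq'ne : q' ∈ Finset.univ.erase (a j) :=
        Finset.mem_erase.2 ⟨hqq, Finset.mem_univ _⟩
      have hsplit : ∀ m : Fin l × Bool → ℕ,
          (∑ q : Fin l × Bool, (m q)^2)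
            = (m (a j))^2 + ((m q')^2
              + ∑ q ∈ (Finset.univ.erase (a j)).erase q', (m q)^2) := by
        intro m
        rw [← Finset.add_sum_erase _ _ (Finset.mem_univ (a j)),
          ← Finset.add_sum_erase _ _ hq'ne]
      have hΦa : Φ a = (nA (a j))^2 + ((nA q')^2
          + ∑ q ∈ (Finset.univ.erase (a j)).erase q', (nA q)^2) := hsplit nA
      have hΦa' : Φ a' = (nA (a j) - 1)^2 + ((nA q' + 1)^2
          + ∑ q ∈ (Finset.univ.erase (a j)).erase q', (nA q)^2) := by
        show (∑ q : Fin l × Bool, ((Finset.univ.filter fun j' => a' j' = q).card)^2) = _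
        rw [hsplit (fun q => (Finset.univ.filter fun j' => a' j' = q).card)]
        rw [h1, Finset.card_erase_of_mem hj_mem, h2, Finset.card_insert_of_notMem
          (fun hmem => hqq ((Finset.mem_filter.1 hmem).2).symm)]
        congr 1
        congr 1
        refine Finset.sum_congr rfl fun q hq => ?_
        have hqa : q ≠ a j := (Finset.mem_erase.1 (Finset.mem_erase.1 hq).2).1
        have hqq' : q ≠ q' := (Finset.mem_erase.1 hq).1
        rw [h3 q hqa hqq']
      have hge1 : 1 ≤ nA (a j) := Finset.card_pos.2 ⟨j, hj_mem⟩
      rw [hΦa, hΦa'] at hmin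
      obtain ⟨A, hA⟩ := Nat.exists_eq_add_of_le hge1
      rw [hA] at hmin ⊢
      simp only [Nat.add_sub_cancel_left] at hmin
      nlinarith [hmin]
  -- the equilibrium profile
  set σ : Game.Profile (PlB l k) (ResB l) := buildProf l k v a with hσdef
  have hσ : (GammaB φ p).Valid σ := by
    intro u
    cases u with
    | u1 => constructor <;> simp [hσdef, buildProf, GammaB]
    | u2 => constructor <;> simp [hσdef, buildProf, GammaB]
    | uvar x => constructor <;> simp [hσdef, buildProf, GammaB]
    | ucl j =>
      constructor <;>
        · simp only [hσdef, buildProf, GammaB, Finset.mem_image]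
          exact ⟨a j, haC j, rfl⟩
  have hu1fst : (σ .u1).1 = {e1} := rfl
  have hu1snd : (σ .u1).2 = {e1} := rfl
  have hu2fst : (σ .u2).1 = {e4} := rfl
  have huvfst : ∀ x, (σ (.uvar x)).1 = {ev x (!v x)} := fun _ => rfl
  have huclfst : ∀ j, (σ (.ucl j)).1 = {ev (a j).1 (a j).2} := fun _ => rfl
  have hcntC : ∀ x b, cntC σ x b = nA (x, b) := by
    intro x b
    rw [cntC, hnA]
    congr 1
    apply Finset.filter_congr
    intro j _
    rw [huclfst j]
    simp [Prod.ext_iff, eq_comm]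
  have hcntV : cntV σ = 0 := by
    rw [cntV]
    simp only [Finset.card_eq_zero, Finset.filter_eq_empty_iff]
    intro x _
    rw [huvfst x]
    simp
  -- malicious loads in σ
  have hmal : ∀ (w : PlB l k) (e : ResB l), w ≠ .u1 →
      (GammaB φ p).malLoadEx σ w e = if e = e1 then p else 0 := by
    intro w e hw
    rw [GB_mal, if_neg hw, hu1snd]
    simp
  have hmalu1 : ∀ e : ResB l, (GammaB φ p).malLoadEx σ .u1 e = 0 := by
    intro e; rw [GB_mal]; simp
  refine ⟨σ, hσ, fun u t ht => ⟨?_, ?_⟩⟩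
  -- private cost conditions
  · cases u with
    | u1 =>
      have hts : t = {e1} ∨ t = {e2} ∨ t = {e3} := by simpa [GammaB] using ht
      have hPC : (GammaB φ p).PC σ .u1 = 1 := by
        rw [PC_singleton _ σ .u1 e1 hu1fst, GB_f_e1, selfLoadEx_u1 hσ e1 (by simp), hmalu1]
        rw [hu2fst]
        simp
      rw [hPC, Game.PC_updS]
      rcases hts with rfl | rfl | rfl <;>
        rw [Finset.sum_singleton, hmalu1] <;>
        [rw [GB_f_e1, selfLoadEx_u1 hσ e1 (by simp)];
         rw [GB_f_e2, selfLoadEx_u1 hσ e2 (by simp)];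
         rw [GB_f_e3, selfLoadEx_u1 hσ e3 (by simp)]] <;>
        rw [hu2fst] <;> simp
    | u2 =>
      have hts : t = {e1} ∨ t = {e2} ∨ t = {e3} ∨ t = {e4} := by simpa [GammaB] using ht
      have hPC : (GammaB φ p).PC σ .u2 = 1 := by
        rw [PC_singleton _ σ .u2 e4 hu2fst, GB_f_e4, selfLoadEx_u2_e4 hσ,
          hmal .u2 e4 (by simp), hcntV]
        simp
      rw [hPC, Game.PC_updS]
      rcases hts with rfl | rfl | rfl | rfl
      · rw [Finset.sum_singleton, GB_f_e1, selfLoadEx_u2_123 hσ e1 (by simp),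
          hmal .u2 e1 (by simp), hu1fst, if_pos rfl, if_pos rfl]
        linarith
      · rw [Finset.sum_singleton, GB_f_e2, selfLoadEx_u2_123 hσ e2 (by simp),
          hmal .u2 e2 (by simp), hu1fst, if_neg (by simp), if_neg (by simp)]
        norm_num
      · rw [Finset.sum_singleton, GB_f_e3, selfLoadEx_u2_123 hσ e3 (by simp),
          hmal .u2 e3 (by simp), hu1fst, if_neg (by simp), if_neg (by simp)]
        norm_num
      · rw [Finset.sum_singleton, GB_f_e4, selfLoadEx_u2_e4 hσ,
          hmal .u2 e4 (by simp), hcntV, if_neg (by simp)]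
        norm_num
    | uvar x =>
      have hts : t = {e4} ∨ t = {ev x false} ∨ t = {ev x true} := by
        simpa [GammaB] using ht
      have hPC : (GammaB φ p).PC σ (.uvar x) = 3 / 2 := by
        rw [PC_singleton _ σ (.uvar x) (ev x (!v x)) (huvfst x), GB_f_ev,
          selfLoadEx_uvar_ev hσ, hmal _ _ (by simp), hcntC, hn0,
          if_neg (by simp : (ev x (!v x) : ResB l) ≠ e1)]
        norm_num
      rw [hPC, Game.PC_updS]
      rcases hts with rfl | rfl | rfl
      · rw [Finset.sum_singleton, GB_f_e4, selfLoadEx_uvar_e4 hσ,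
          hmal _ _ (by simp), hu2fst, hcntV, huvfst x,
          if_neg (by simp : ({ev x (!v x)} : Finset (ResB l)) ≠ {e4}),
          if_pos rfl, if_neg (by simp : (e4 : ResB l) ≠ e1)]
        norm_num
      · rw [Finset.sum_singleton, GB_f_ev, selfLoadEx_uvar_ev hσ, hmal _ _ (by simp),
          hcntC, if_neg (by simp : (ev x false : ResB l) ≠ e1)]
        have h0 : (0:ℝ) ≤ (nA (x, false) : ℝ) := Nat.cast_nonneg _
        nlinarith
      · rw [Finset.sum_singleton, GB_f_ev, selfLoadEx_uvar_ev hσ, hmal _ _ (by simp),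
          hcntC, if_neg (by simp : (ev x true : ResB l) ≠ e1)]
        have h0 : (0:ℝ) ≤ (nA (x, true) : ℝ) := Nat.cast_nonneg _
        nlinarith
    | ucl j =>
      obtain ⟨q', hq'C, hq't⟩ : ∃ q' ∈ φ.C j, ({ev q'.1 q'.2} : Finset (ResB l)) = t := by
        simpa [GammaB, Finset.mem_image] using ht
      subst hq't
      have hvown : (σ (.uvar (a j).1)).1 ≠ {ev (a j).1 (a j).2} := by
        rw [huvfst]
        simp only [Ne, Finset.singleton_inj, ResB.ev.injEq, not_and]
        intro _
        rw [← haV j]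
        simp
      have hPC : (GammaB φ p).PC σ (.ucl j) = 3 / 2 * (nA (a j) : ℝ) := by
        rw [PC_singleton _ σ (.ucl j) (ev (a j).1 (a j).2) (huclfst j), GB_f_ev,
          selfLoadEx_ucl hσ, hmal _ _ (by simp), hcntC, huclfst j,
          if_neg hvown, if_pos rfl]
        have : nA ((a j).1, (a j).2) = nA (a j) := by rw [Prod.mk.eta]
        rw [this]
        simp only [if_neg (by simp : (ev (a j).1 (a j).2 : ResB l) ≠ e1)]
        ring
      rw [hPC, Game.PC_updS, Finset.sum_singleton, GB_f_ev, selfLoadEx_ucl hσ,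
        hmal _ _ (by simp), hcntC, huclfst j, huvfst q'.1]
      simp only [if_neg (by simp : (ev q'.1 q'.2 : ResB l) ≠ e1)]
      by_cases hsat' : v q'.1 = q'.2
      · have hvne : ({ev q'.1 (!v q'.1)} : Finset (ResB l)) ≠ {ev q'.1 q'.2} := by
          rw [hsat']
          simp
        rw [if_neg hvne]
        by_cases hqa : ({ev (a j).1 (a j).2} : Finset (ResB l)) = {ev q'.1 q'.2}
        · have : a j = q' := by
            simp only [Finset.singleton_inj, ResB.ev.injEq] at hqa
            exact Prod.ext hqa.1 hqa.2
          rw [if_pos hqa, this]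
          simp only [Prod.mk.eta]
          have h1 : (1:ℝ) ≤ (nA q' : ℝ) := by
            exact_mod_cast Finset.card_pos.2 ⟨j, Finset.mem_filter.2
              ⟨Finset.mem_univ _, this⟩⟩
          linarith
        · rw [if_neg hqa]
          have hle : nA (a j) ≤ nA q' + 1 := hexch j q' hq'C hsat'
          have : nA (q'.1, q'.2) = nA q' := by rw [Prod.mk.eta]
          rw [this]
          have hle' : (nA (a j) : ℝ) ≤ (nA q' : ℝ) + 1 := by exact_mod_cast hle
          linarith
      · -- unsatisfied literal: the variable player is there
        have hb : q'.2 = !v q'.1 := by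
          cases hq2 : q'.2 <;> cases hv2 : v q'.1 <;> simp_all
        have hvmem : ({ev q'.1 (!v q'.1)} : Finset (ResB l)) = {ev q'.1 q'.2} := by
          rw [hb]
        rw [if_pos hvmem]
        have hqa : ({ev (a j).1 (a j).2} : Finset (ResB l)) ≠ {ev q'.1 q'.2} := by
          intro h
          simp only [Finset.singleton_inj, ResB.ev.injEq] at h
          have hja : a j = q' := Prod.ext h.1 h.2
          have hj2 := haV j
          rw [hja] at hj2
          exact hsat' hj2
        rw [if_neg hqa]
        have hq'0 : nA (q'.1, q'.2) = 0 := by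
          rw [show (q'.1, q'.2) = (q'.1, !v q'.1) by rw [← hb]]
          exact hn0 q'.1
        rw [hq'0]
        have h2 : (nA (a j) : ℝ) ≤ 2 := by exact_mod_cast hn2 (a j)
        norm_num
        linarith
  -- social cost conditions
  · by_cases hu1 : u = .u1
    · subst hu1
      have hts : t = {e1} ∨ t = {e2} ∨ t = {e3} := by simpa [GammaB] using ht
      have heq : ∀ w, (GammaB φ p).PC (Game.updM σ .u1 t) w = (GammaB φ p).PC σ w := by
        intro w
        by_cases hw2 : w = .u2
        · subst hw2
          rw [PC_updM_u1]
          unfold Game.PC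
          refine Finset.sum_congr rfl fun e he => ?_
          rw [hu2fst] at he
          simp only [Finset.mem_singleton] at he
          subst he
          rw [GB_mal, if_neg (by simp : (PlB.u2 : PlB l k) ≠ .u1),
            if_neg (by simp : (PlB.u2 : PlB l k) ≠ .u1)]
          have h1 : (e4 : ResB l) ∉ t := by rcases hts with rfl | rfl | rfl <;> simp
          have h2 : (e4 : ResB l) ∉ (σ .u1).2 := by rw [hu1snd]; simp
          rw [if_neg h1, if_neg h2]
        · exact PC_updM_u1_eq hσ t hts w hw2
      exact le_of_eq (SC_congr _ _ _ heq)
    · exact le_of_eq (SC_congr _ _ _ (PC_updM_ne_u1 σ u hu1 t))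

end Backward

theorem gammaB_pure_BNE_iff_satisfiable
    {l k : ℕ} (hl : 1 ≤ l) (hk : 1 ≤ k) (φ : Formula l k) (hφ : φ.Restricted)
    (p : ℝ) (hp0 : 0 < p) (hp1 : p ≤ 1) :
    (∃ σ : Game.Profile (PlB l k) (ResB l), (GammaB φ p).IsPureBNE σ) ↔
      φ.Satisfiable := by
  constructor
  · rintro ⟨σ, hσ⟩
    exact GB_forward hp0 hp1 σ hσ
  · exact fun hs => GB_backward hφ hp0 hp1 hs
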